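/- Let c > 0, r > 0, R ≥ 1, s ∈ ℝ, and let S = [s, ∞) × [−R, R]. Suppose v : S → ℝ is continuous and bounded above, C² in the interior of S, admits one-sided normal derivatives on the lateral edges, and satisfies: Δv ≥ c² v in the interior of S; v(s, x₂) ≤ r for all x₂ ∈ [−R, R]; and ∂v/∂x₂(x₁, R) ≤ 0 and ∂v/∂x₂(x₁, −R) ≥ 0 for all x₁ > s. Then for every (x₁, x₂) ∈ S, v(x₁, x₂) ≤ r · e^{−c(x₁ − s)}. -/

import Mathlib

open Set

noncomputable section

/-- The Laplacian of a function of two real variables. -/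
def lap2 (v : ℝ × ℝ → ℝ) (x : ℝ × ℝ) : ℝ :=
  fderiv ℝ (fun y => fderiv ℝ v y ((1 : ℝ), (0 : ℝ))) x (1, 0) +
  fderiv ℝ (fun y => fderiv ℝ v y ((0 : ℝ), (1 : ℝ))) x (0, 1)

/-!
For `ε > 0` the barrier `w = r e^{-c(x₁-s)} + ε (e^{c(x₁-s)} + cosh (c x₂))` satisfies
`Δw = c² w`. On a rectangle `[s, T] × [-R, R]` a positive maximum of `v - w` is impossible: not on
the left edge, where `v ≤ r < w`; not on the right edge once `T` is so large that `w` exceeds the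
upper bound of `v` there; not on a lateral edge, where the outward normal derivative of `w` is
strictly positive while that of `v` is `≤ 0`; and not in the interior, where
`Δ(v - w) ≥ c² (v - w) > 0` although the Laplacian is `≤ 0` at a local maximum. Hence `v ≤ w`, and
`ε → 0` gives the estimate.
-/

open Filter Topology

theorem IsLocalMax.deriv_deriv_nonpos {g : ℝ → ℝ} {a : ℝ} (h : IsLocalMax g a)
    (hg : ContinuousAt g a) : deriv (deriv g) a ≤ 0 := by
  by_contra! hpos
  have hmin : IsLocalMin g a := isLocalMin_of_deriv_deriv_pos hpos h.deriv_eq_zero hg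
  have hconst : g =ᶠ[𝓝 a] fun _ => g a := (h.and hmin).mono fun _ hx => le_antisymm hx.1 hx.2
  have hzero : deriv (deriv g) a = 0 := by
    rw [hconst.deriv.deriv_eq]
    simp
  exact hpos.ne' hzero

theorem IsMaxOn.hasDerivWithinAt_Iic_nonneg {g : ℝ → ℝ} {g' a b : ℝ} (hab : a < b)
    (h : IsMaxOn g (Icc a b) b) (hg : HasDerivWithinAt g g' (Iic b) b) : 0 ≤ g' := by
  have hcone : a - b ∈ posTangentConeAt (Icc a b) b :=
    sub_mem_posTangentConeAt_of_segment_subset (segment_symm ℝ b a ▸ segment_subset_Icc hab.le)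
  have := h.localize.hasFDerivWithinAt_nonpos (hg.mono Icc_subset_Iic_self).hasFDerivWithinAt hcone
  simp only [ContinuousLinearMap.toSpanSingleton_apply, smul_eq_mul] at this
  nlinarith

theorem IsMaxOn.hasDerivWithinAt_Ici_nonpos {g : ℝ → ℝ} {g' a b : ℝ} (hab : a < b)
    (h : IsMaxOn g (Icc a b) a) (hg : HasDerivWithinAt g g' (Ici a) a) : g' ≤ 0 := by
  have hcone : b - a ∈ posTangentConeAt (Icc a b) a :=
    sub_mem_posTangentConeAt_of_segment_subset (segment_subset_Icc hab.le)
  have := h.localize.hasFDerivWithinAt_nonpos (hg.mono Icc_subset_Ici_self).hasFDerivWithinAt hcone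
  simp only [ContinuousLinearMap.toSpanSingleton_apply, smul_eq_mul] at this
  nlinarith

section Directional

variable {E F : Type*} [NormedAddCommGroup E] [NormedSpace ℝ E]
  [NormedAddCommGroup F] [NormedSpace ℝ F]

theorem ContDiffAt.deriv_deriv_comp_line {f : E → F} {p : E} (hf : ContDiffAt ℝ 2 f p) (e : E) :
    deriv (deriv fun t : ℝ => f (p + t • e)) 0 = fderiv ℝ (fun y => fderiv ℝ f y e) p e := by
  have hline : ∀ t : ℝ, HasDerivAt (fun t : ℝ => p + t • e) e t := fun t => by
    simpa using ((hasDerivAt_id t).smul_const e).const_add p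
  have htend : Tendsto (fun t : ℝ => p + t • e) (𝓝 0) (𝓝 p) := by
    simpa using (hline 0).continuousAt.tendsto
  have hdiff : ∀ᶠ y in 𝓝 p, DifferentiableAt ℝ f y :=
    (hf.eventually (by simp)).mono fun y hy => hy.differentiableAt (by simp)
  have hfirst : deriv (fun t : ℝ => f (p + t • e)) =ᶠ[𝓝 0] fun t => fderiv ℝ f (p + t • e) e :=
    (htend.eventually hdiff).mono fun t ht => (ht.hasFDerivAt.comp_hasDerivAt t (hline t)).deriv
  have hsecond : DifferentiableAt ℝ (fun y => fderiv ℝ f y e) p :=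
    ((hf.fderiv_right (m := 1) (by norm_num)).differentiableAt one_ne_zero).clm_apply
      (differentiableAt_const e)
  rw [hfirst.deriv_eq]
  exact (hsecond.hasFDerivAt.comp_hasDerivAt_of_eq (0 : ℝ) (hline 0) (by simp)).deriv

theorem IsLocalMax.fderiv_fderiv_apply_self_nonpos {f : E → ℝ} {p : E} (h : IsLocalMax f p)
    (hf : ContDiffAt ℝ 2 f p) (e : E) : fderiv ℝ (fun y => fderiv ℝ f y e) p e ≤ 0 := by
  rw [← hf.deriv_deriv_comp_line]
  have hline : Continuous fun t : ℝ => p + t • e := by fun_prop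
  refine IsLocalMax.deriv_deriv_nonpos ?_ (hf.continuousAt.comp_of_eq hline.continuousAt (by simp))
  exact IsLocalMax.comp_continuous (g := fun t : ℝ => p + t • e) (by simpa using h)
    hline.continuousAt

theorem fderiv_fderiv_apply_sub {f g : E → F} {p : E} (hf : ContDiffAt ℝ 2 f p)
    (hg : ContDiffAt ℝ 2 g p) (e e' : E) :
    fderiv ℝ (fun y => fderiv ℝ (f - g) y e) p e' =
      fderiv ℝ (fun y => fderiv ℝ f y e) p e' - fderiv ℝ (fun y => fderiv ℝ g y e) p e' := by
  have hdiff : ∀ {h : E → F}, ContDiffAt ℝ 2 h p → ∀ᶠ y in 𝓝 p, DifferentiableAt ℝ h y :=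
    fun hh => (hh.eventually (by simp)).mono fun y hy => hy.differentiableAt (by simp)
  have hsecond : ∀ {h : E → F}, ContDiffAt ℝ 2 h p →
      DifferentiableAt ℝ (fun y => fderiv ℝ h y e) p := fun hh =>
    ((hh.fderiv_right (m := 1) (by norm_num)).differentiableAt one_ne_zero).clm_apply
      (differentiableAt_const e)
  have hfirst : (fun y => fderiv ℝ (f - g) y e) =ᶠ[𝓝 p]
      fun y => fderiv ℝ f y e - fderiv ℝ g y e :=
    ((hdiff hf).and (hdiff hg)).mono fun y hy => by simp [fderiv_sub hy.1 hy.2]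
  rw [hfirst.fderiv_eq, fderiv_fun_sub (hsecond hf) (hsecond hg)]
  rfl

end Directional

theorem lap2_nonpos_of_isLocalMax {f : ℝ × ℝ → ℝ} {p : ℝ × ℝ} (h : IsLocalMax f p)
    (hf : ContDiffAt ℝ 2 f p) : lap2 f p ≤ 0 :=
  add_nonpos (h.fderiv_fderiv_apply_self_nonpos hf _) (h.fderiv_fderiv_apply_self_nonpos hf _)

theorem lap2_sub {f g : ℝ × ℝ → ℝ} {p : ℝ × ℝ} (hf : ContDiffAt ℝ 2 f p)
    (hg : ContDiffAt ℝ 2 g p) : lap2 (f - g) p = lap2 f p - lap2 g p := by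
  simp only [lap2, fderiv_fderiv_apply_sub hf hg]
  ring

theorem lap2_add_comp_fst_snd {A B : ℝ → ℝ} (hA : Differentiable ℝ A)
    (hA' : Differentiable ℝ (deriv A)) (hB : Differentiable ℝ B)
    (hB' : Differentiable ℝ (deriv B)) (x : ℝ × ℝ) :
    lap2 (fun y => A y.1 + B y.2) x = deriv (deriv A) x.1 + deriv (deriv B) x.2 := by
  have hderiv : ∀ {C D : ℝ → ℝ}, Differentiable ℝ C → Differentiable ℝ D → ∀ y v : ℝ × ℝ,
      fderiv ℝ (fun y => C y.1 + D y.2) y v = deriv C y.1 * v.1 + deriv D y.2 * v.2 := by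
    intro C D hC hD y v
    have := ((hC y.1).hasDerivAt.comp_hasFDerivAt y (hasFDerivAt_fst (𝕜 := ℝ) (p := y))).add
      ((hD y.2).hasDerivAt.comp_hasFDerivAt y (hasFDerivAt_snd (𝕜 := ℝ) (p := y)))
    rw [show (fun y : ℝ × ℝ => C y.1 + D y.2) = C ∘ Prod.fst + D ∘ Prod.snd from rfl,
      this.fderiv]
    simp [mul_comm]
  have h0 : Differentiable ℝ (fun _ : ℝ => (0 : ℝ)) := differentiable_const 0
  have h1 := hderiv hA' h0 x (1, 0)
  have h2 := hderiv h0 hB' x (0, 1)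
  simpa [lap2, hderiv hA hB] using congr($h1 + $h2)

theorem Real.hasDerivAt_exp_mul_sub (k a t : ℝ) :
    HasDerivAt (fun t => Real.exp (k * (t - a))) (k * Real.exp (k * (t - a))) t := by
  simpa [mul_comm] using (((hasDerivAt_id t).sub_const a).const_mul k).exp

theorem Real.hasDerivAt_cosh_mul (k t : ℝ) :
    HasDerivAt (fun t => Real.cosh (k * t)) (k * Real.sinh (k * t)) t := by
  simpa [mul_comm] using ((hasDerivAt_id t).const_mul k).cosh

theorem Real.hasDerivAt_sinh_mul (k t : ℝ) :
    HasDerivAt (fun t => Real.sinh (k * t)) (k * Real.cosh (k * t)) t := by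
  simpa [mul_comm] using ((hasDerivAt_id t).const_mul k).sinh

def barrier (c r s ε : ℝ) (x : ℝ × ℝ) : ℝ :=
  r * Real.exp (-c * (x.1 - s)) + ε * (Real.exp (c * (x.1 - s)) + Real.cosh (c * x.2))

theorem contDiff_barrier (c r s ε : ℝ) : ContDiff ℝ 2 (barrier c r s ε) := by
  unfold barrier
  fun_prop

theorem lap2_barrier (c r s ε : ℝ) (x : ℝ × ℝ) :
    lap2 (barrier c r s ε) x = c ^ 2 * barrier c r s ε x := by
  set A : ℝ → ℝ := fun t => r * Real.exp (-c * (t - s)) + ε * Real.exp (c * (t - s))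
  set A' : ℝ → ℝ := fun t =>
    r * (-c * Real.exp (-c * (t - s))) + ε * (c * Real.exp (c * (t - s)))
  set B : ℝ → ℝ := fun t => ε * Real.cosh (c * t)
  set B' : ℝ → ℝ := fun t => ε * (c * Real.sinh (c * t))
  have hA : ∀ t, HasDerivAt A (A' t) t := fun t =>
    ((Real.hasDerivAt_exp_mul_sub (-c) s t).const_mul r).add
      ((Real.hasDerivAt_exp_mul_sub c s t).const_mul ε)
  have hA' : ∀ t, HasDerivAt A' (c ^ 2 * A t) t := fun t =>
    ((((Real.hasDerivAt_exp_mul_sub (-c) s t).const_mul (-c)).const_mul r).add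
      (((Real.hasDerivAt_exp_mul_sub c s t).const_mul c).const_mul ε)).congr_deriv (by ring)
  have hB : ∀ t, HasDerivAt B (B' t) t := fun t => (Real.hasDerivAt_cosh_mul c t).const_mul ε
  have hB' : ∀ t, HasDerivAt B' (c ^ 2 * B t) t := fun t =>
    (((Real.hasDerivAt_sinh_mul c t).const_mul c).const_mul ε).congr_deriv (by ring)
  have hdA : deriv A = A' := funext fun t => (hA t).deriv
  have hdB : deriv B = B' := funext fun t => (hB t).deriv
  have hsplit : barrier c r s ε = fun y => A y.1 + B y.2 := by
    funext y
    simp only [barrier, A, B]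
    ring
  rw [hsplit, lap2_add_comp_fst_snd (fun t => (hA t).differentiableAt)
    (hdA ▸ fun t => (hA' t).differentiableAt) (fun t => (hB t).differentiableAt)
    (hdB ▸ fun t => (hB' t).differentiableAt), hdA, hdB, (hA' _).deriv, (hB' _).deriv]
  ring

theorem hasDerivAt_barrier_snd (c r s ε x₁ t : ℝ) :
    HasDerivAt (fun t => barrier c r s ε (x₁, t)) (ε * (c * Real.sinh (c * t))) t := by
  simp only [barrier]
  exact (((Real.hasDerivAt_cosh_mul c t).const_add _).const_mul ε).const_add _

theorem lt_barrier_left (c r s : ℝ) {ε : ℝ} (hε : 0 < ε) (t : ℝ) :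
    r < barrier c r s ε (s, t) := by
  have := Real.cosh_pos (c * t)
  simp only [barrier, sub_self, mul_zero, Real.exp_zero, mul_one]
  nlinarith

theorem eventually_lt_barrier (r s : ℝ) {c ε : ℝ} (hc : 0 < c) (hε : 0 < ε) (M : ℝ) :
    ∀ᶠ T in atTop, ∀ t, M < barrier c r s ε (T, t) := by
  have hlin : Tendsto (fun T => c * (T - s)) atTop atTop :=
    (tendsto_atTop_add_const_right _ (-s) tendsto_id).const_mul_atTop hc
  have hdecay : Tendsto (fun T => r * Real.exp (-c * (T - s))) atTop (𝓝 0) := by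
    simpa using (Real.tendsto_exp_atBot.comp (tendsto_neg_atTop_atBot.comp hlin)).const_mul r
  have hgrowth : Tendsto (fun T => ε * Real.exp (c * (T - s))) atTop atTop :=
    (Real.tendsto_exp_atTop.comp hlin).const_mul_atTop hε
  filter_upwards [(hdecay.add_atTop hgrowth).eventually_gt_atTop M] with T hT t
  have := mul_pos hε (Real.cosh_pos (c * t))
  simp only [barrier]
  linarith

theorem tendsto_barrier_zero (c r s : ℝ) (x : ℝ × ℝ) :
    Tendsto (fun ε => barrier c r s ε x) (𝓝 0) (𝓝 (r * Real.exp (-c * (x.1 - s)))) := by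
  have : Continuous fun ε => barrier c r s ε x := by
    unfold barrier
    fun_prop
  simpa [barrier] using this.tendsto 0

theorem nonpos_of_lap2_pos_on_rectangle {u : ℝ × ℝ → ℝ} {a₁ b₁ a₂ b₂ : ℝ} (h₂ : a₂ < b₂)
    (hcont : ContinuousOn u (Icc a₁ b₁ ×ˢ Icc a₂ b₂))
    (hC2 : ContDiffOn ℝ 2 u (Ioo a₁ b₁ ×ˢ Ioo a₂ b₂))
    (hlap : ∀ x ∈ Ioo a₁ b₁ ×ˢ Ioo a₂ b₂, 0 < u x → 0 < lap2 u x)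
    (hleft : ∀ t ∈ Icc a₂ b₂, u (a₁, t) ≤ 0) (hright : ∀ t ∈ Icc a₂ b₂, u (b₁, t) ≤ 0)
    (htop : ∀ x₁ ∈ Ioo a₁ b₁, ∃ d < 0, HasDerivWithinAt (fun t => u (x₁, t)) d (Iic b₂) b₂)
    (hbot : ∀ x₁ ∈ Ioo a₁ b₁, ∃ d > 0, HasDerivWithinAt (fun t => u (x₁, t)) d (Ici a₂) a₂) :
    ∀ x ∈ Icc a₁ b₁ ×ˢ Icc a₂ b₂, u x ≤ 0 := by
  intro x hx
  obtain ⟨⟨p₁, p₂⟩, hp, hmax⟩ :=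
    (isCompact_Icc.prod isCompact_Icc).exists_isMaxOn ⟨x, hx⟩ hcont
  refine (hmax hx).trans (not_lt.1 fun hpos => ?_)
  obtain ⟨⟨ha₁, hb₁⟩, ha₂, hb₂⟩ := hp
  have hslice : ∀ t₀, u (p₁, p₂) = u (p₁, t₀) →
      IsMaxOn (fun t => u (p₁, t)) (Icc a₂ b₂) t₀ := fun t₀ h t ht =>
    show u (p₁, t) ≤ u (p₁, t₀) from h ▸ hmax ⟨⟨ha₁, hb₁⟩, ht⟩
  rcases ha₁.eq_or_lt with rfl | ha₁
  · exact (hleft p₂ ⟨ha₂, hb₂⟩).not_gt hpos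
  rcases hb₁.eq_or_lt with rfl | hb₁
  · exact (hright p₂ ⟨ha₂, hb₂⟩).not_gt hpos
  rcases hb₂.eq_or_lt with rfl | hb₂
  · obtain ⟨d, hd, hderiv⟩ := htop p₁ ⟨ha₁, hb₁⟩
    exact hd.not_ge ((hslice _ rfl).hasDerivWithinAt_Iic_nonneg h₂ hderiv)
  rcases ha₂.eq_or_lt with rfl | ha₂
  · obtain ⟨d, hd, hderiv⟩ := hbot p₁ ⟨ha₁, hb₁⟩
    exact hd.not_ge ((hslice _ rfl).hasDerivWithinAt_Ici_nonpos h₂ hderiv)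
  have hint : (p₁, p₂) ∈ Ioo a₁ b₁ ×ˢ Ioo a₂ b₂ := ⟨⟨ha₁, hb₁⟩, ha₂, hb₂⟩
  have hopen : IsOpen (Ioo a₁ b₁ ×ˢ Ioo a₂ b₂) := isOpen_Ioo.prod isOpen_Ioo
  have hlocal : IsLocalMax u (p₁, p₂) :=
    hmax.isLocalMax (mem_of_superset (hopen.mem_nhds hint)
      (prod_mono Ioo_subset_Icc_self Ioo_subset_Icc_self))
  exact (hlap _ hint hpos).not_ge
    (lap2_nonpos_of_isLocalMax hlocal (hC2.contDiffAt (hopen.mem_nhds hint)))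

theorem le_barrier {c r R s ε : ℝ} {v : ℝ × ℝ → ℝ} (hc : 0 < c) (hR : 0 < R) (hε : 0 < ε)
    (hcont : ContinuousOn v (Ici s ×ˢ Icc (-R) R))
    (hbdd : ∃ M : ℝ, ∀ x ∈ Ici s ×ˢ Icc (-R) R, v x ≤ M)
    (hC2 : ContDiffOn ℝ 2 v (Ioi s ×ˢ Ioo (-R) R))
    (hsub : ∀ x ∈ Ioi s ×ˢ Ioo (-R) R, c ^ 2 * v x ≤ lap2 v x)
    (hleft : ∀ x₂ ∈ Icc (-R) R, v (s, x₂) ≤ r)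
    (htop : ∀ x₁ ∈ Ioi s,
      DifferentiableWithinAt ℝ (fun t => v (x₁, t)) (Iic R) R ∧
      derivWithin (fun t => v (x₁, t)) (Iic R) R ≤ 0)
    (hbot : ∀ x₁ ∈ Ioi s,
      DifferentiableWithinAt ℝ (fun t => v (x₁, t)) (Ici (-R)) (-R) ∧
      0 ≤ derivWithin (fun t => v (x₁, t)) (Ici (-R)) (-R))
    (x : ℝ × ℝ) (hx : x ∈ Ici s ×ˢ Icc (-R) R) : v x ≤ barrier c r s ε x := by
  obtain ⟨M, hM⟩ := hbdd
  obtain ⟨T, hxT, hMT⟩ :=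
    ((eventually_ge_atTop x.1).and (eventually_lt_barrier r s hc hε M)).exists
  have hw := contDiff_barrier c r s ε
  have hsinh : 0 < c * Real.sinh (c * R) := mul_pos hc (Real.sinh_pos_iff.2 (by positivity))
  rw [← sub_nonpos]
  refine nonpos_of_lap2_pos_on_rectangle (u := v - barrier c r s ε) (a₁ := s) (b₁ := T)
    (by linarith) ((hcont.mono (prod_mono Icc_subset_Ici_self subset_rfl)).sub
      hw.continuous.continuousOn)
    ((hC2.mono (prod_mono Ioo_subset_Ioi_self subset_rfl)).sub hw.contDiffOn)
    (fun y hy hpos => ?_) (fun t ht => ?_) (fun t ht => ?_) (fun x₁ hx₁ => ?_)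
    (fun x₁ hx₁ => ?_) x ⟨⟨hx.1, hxT⟩, hx.2⟩
  · have hyS : y ∈ Ioi s ×ˢ Ioo (-R) R := ⟨hy.1.1, hy.2⟩
    have hvy : ContDiffAt ℝ 2 v y :=
      hC2.contDiffAt ((isOpen_Ioi.prod isOpen_Ioo).mem_nhds hyS)
    rw [Pi.sub_apply] at hpos
    rw [lap2_sub hvy hw.contDiffAt, lap2_barrier]
    linarith [hsub y hyS, mul_pos (pow_pos hc 2) hpos]
  · rw [Pi.sub_apply]
    linarith [hleft t ht, lt_barrier_left c r s hε t]
  · rw [Pi.sub_apply]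
    linarith [hM (T, t) ⟨hx.1.trans hxT, ht⟩, hMT t]
  · obtain ⟨hdiff, hderiv⟩ := htop x₁ hx₁.1
    refine ⟨_, ?_,
      hdiff.hasDerivWithinAt.sub (hasDerivAt_barrier_snd c r s ε x₁ R).hasDerivWithinAt⟩
    linarith [mul_pos hε hsinh]
  · obtain ⟨hdiff, hderiv⟩ := hbot x₁ hx₁.1
    refine ⟨_, ?_,
      hdiff.hasDerivWithinAt.sub (hasDerivAt_barrier_snd c r s ε x₁ (-R)).hasDerivWithinAt⟩
    rw [mul_neg, Real.sinh_neg]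
    linarith [mul_pos hε hsinh]

theorem exp_comparison_halfstrip_general (c r R s : ℝ)
    (hc : 0 < c) (hR : 1 ≤ R)
    (v : ℝ × ℝ → ℝ)
    (hcont : ContinuousOn v (Ici s ×ˢ Icc (-R) R))
    (hbdd : ∃ M : ℝ, ∀ x ∈ Ici s ×ˢ Icc (-R) R, v x ≤ M)
    (hC2 : ContDiffOn ℝ 2 v (Ioi s ×ˢ Ioo (-R) R))
    (hsub : ∀ x ∈ Ioi s ×ˢ Ioo (-R) R, c ^ 2 * v x ≤ lap2 v x)
    (hleft : ∀ x₂ ∈ Icc (-R) R, v (s, x₂) ≤ r)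
    (htop : ∀ x₁ ∈ Ioi s,
      DifferentiableWithinAt ℝ (fun t => v (x₁, t)) (Iic R) R ∧
      derivWithin (fun t => v (x₁, t)) (Iic R) R ≤ 0)
    (hbot : ∀ x₁ ∈ Ioi s,
      DifferentiableWithinAt ℝ (fun t => v (x₁, t)) (Ici (-R)) (-R) ∧
      0 ≤ derivWithin (fun t => v (x₁, t)) (Ici (-R)) (-R)) :
    ∀ x ∈ Ici s ×ˢ Icc (-R) R, v x ≤ r * Real.exp (-c * (x.1 - s)) := fun x hx =>
  ge_of_tendsto ((tendsto_barrier_zero c r s x).mono_left nhdsWithin_le_nhds)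
    (eventually_nhdsWithin_of_forall (s := Ioi 0) fun _ hε =>
      le_barrier hc (by linarith) hε hcont hbdd hC2 hsub hleft htop hbot x hx)

/-- Exponential comparison estimate on the half-strip
`S = [s, ∞) × [−R, R]`: if `v` is continuous and bounded above on `S`, `Δv ≥ c²v` in
the interior, `v ≤ r` on the left edge, and the outward normal derivative of `v` is
nonpositive on the two horizontal edges, then `v(x₁,x₂) ≤ r e^{−c(x₁ − s)}` on `S`. -/
theorem exp_comparison_halfstrip (c r R s : ℝ)
    (hc : 0 < c) (hr : 0 < r) (hR : 1 ≤ R)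
    (v : ℝ × ℝ → ℝ)
    (hcont : ContinuousOn v (Ici s ×ˢ Icc (-R) R))
    (hbdd : ∃ M : ℝ, ∀ x ∈ Ici s ×ˢ Icc (-R) R, v x ≤ M)
    (hC2 : ContDiffOn ℝ 2 v (Ioi s ×ˢ Ioo (-R) R))
    (hsub : ∀ x ∈ Ioi s ×ˢ Ioo (-R) R, c ^ 2 * v x ≤ lap2 v x)
    (hleft : ∀ x₂ ∈ Icc (-R) R, v (s, x₂) ≤ r)
    (htop : ∀ x₁ ∈ Ioi s,
      DifferentiableWithinAt ℝ (fun t => v (x₁, t)) (Iic R) R ∧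
      derivWithin (fun t => v (x₁, t)) (Iic R) R ≤ 0)
    (hbot : ∀ x₁ ∈ Ioi s,
      DifferentiableWithinAt ℝ (fun t => v (x₁, t)) (Ici (-R)) (-R) ∧
      0 ≤ derivWithin (fun t => v (x₁, t)) (Ici (-R)) (-R)) :
    ∀ x ∈ Ici s ×ˢ Icc (-R) R, v x ≤ r * Real.exp (-c * (x.1 - s)) :=
  exp_comparison_halfstrip_general c r R s hc hR v hcont hbdd hC2 hsub hleft htop hbot
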